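/- Let Q : [0,1]² → ℝ be a nonnegative bivariate trigonometric polynomial of degree at most N in each variable, and let M > 4πN. Then sup over [0,1]² of Q is at most (1 - 4πN/M)⁻¹ times the maximum of Q over the uniform grid {(l₁/M, l₂/M) : l₁, l₂ ∈ {0,...,M-1}}. -/

import Mathlib

/-!
Bernstein's inequality with constant `4πN`, proved through a Fejér-kernel representation of
the derivative. Let `F_N(s) = |∑_{j<N} e^{2πijs}|² / N` and
`G(s) = -i (e^{2πiNs} - e^{-2πiNs}) F_N(s)`. Counting the pairs `(j, j')` with `j' - j = a`
shows `∫₀¹ e^{2πims} G(s) ds = im/N` for `|m| ≤ N`, so every trigonometric polynomial `q` of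
degree `≤ N` satisfies `q'(ξ) = 2πN ∫₀¹ q(t) G(t - ξ) dt`. Since `|G| ≤ 2F_N` and
`∫₀¹ F_N = 1`, `q` is `4πN sup|q|`-Lipschitz.

For the grid bound let `A` be the supremum of `Q` on `[0,1]²`; as `Q ≥ 0` it bounds `|Q|`. Moving
a point to the nearest grid point one coordinate at a time (rounding, then reducing modulo 1 by
periodicity) changes `Q` by at most `2πNA/M` per coordinate, so `A ≤ max_grid Q + (4πN/M) A`.
-/

open Finset Complex Real

noncomputable def fourierMode (m : ℤ) (t : ℝ) : ℂ := exp (2 * π * I * m * t)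

section FourierMode

variable (m n : ℤ) (s t : ℝ)

lemma fourierMode_add : fourierMode (m + n) t = fourierMode m t * fourierMode n t := by
  simp only [fourierMode, ← Complex.exp_add]; push_cast; ring_nf

lemma fourierMode_apply_add : fourierMode m (s + t) = fourierMode m s * fourierMode m t := by
  simp only [fourierMode, ← Complex.exp_add]; push_cast; ring_nf

lemma fourierMode_zero : fourierMode 0 t = 1 := by simp [fourierMode]

lemma conj_fourierMode : (starRingEnd ℂ) (fourierMode m t) = fourierMode (-m) t := by
  simp only [fourierMode, ← Complex.exp_conj, map_mul, conj_I, conj_ofReal, map_ofNat, map_intCast]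
  push_cast; ring_nf

lemma norm_fourierMode : ‖fourierMode m t‖ = 1 := by
  rw [fourierMode, show 2 * (π : ℂ) * I * m * t = ((2 * π * m * t : ℝ) : ℂ) * I by push_cast; ring]
  exact norm_exp_ofReal_mul_I _

lemma fourierMode_periodic : Function.Periodic (fourierMode m) 1 := by
  intro t
  have h1 : fourierMode m 1 = 1 := by
    rw [fourierMode, ofReal_one, mul_one, mul_comm, exp_int_mul_two_pi_mul_I]
  rw [fourierMode_apply_add, h1, mul_one]

@[fun_prop]
lemma continuous_fourierMode : Continuous (fourierMode m) := by
  unfold fourierMode; fun_prop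

lemma hasDerivAt_fourierMode :
    HasDerivAt (fourierMode m) (2 * π * I * m * fourierMode m t) t := by
  have := ((hasDerivAt_id (t : ℂ)).const_mul (2 * π * I * m)).cexp.comp_ofReal
  simp only [id, mul_one] at this
  rw [mul_comm]
  exact this

lemma integral_fourierMode : ∫ t in (0 : ℝ)..1, fourierMode m t = if m = 0 then 1 else 0 := by
  split_ifs with hm
  · simp [hm, fourierMode_zero]
  have hc : 2 * π * I * m ≠ 0 := by simp [pi_ne_zero, I_ne_zero, hm]
  have hderiv : ∀ x ∈ Set.uIcc (0 : ℝ) 1,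
      HasDerivAt (fun t => fourierMode m t / (2 * π * I * m)) (fourierMode m x) x := fun x _ => by
    simpa [mul_div_cancel_left₀ _ hc] using (hasDerivAt_fourierMode m x).div_const (2 * π * I * m)
  rw [intervalIntegral.integral_eq_sub_of_hasDerivAt hderiv
    ((continuous_fourierMode m).intervalIntegrable _ _)]
  simp [(fourierMode_periodic m).eq]

lemma integral_sum_mul_fourierMode {ι : Type*} (s : Finset ι) (a : ι → ℂ) (ω : ι → ℤ) :
    ∫ t in (0 : ℝ)..1, ∑ i ∈ s, a i * fourierMode (ω i) t = ∑ i ∈ s with ω i = 0, a i := by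
  rw [intervalIntegral.integral_finsetSum fun i _ => (by fun_prop : Continuous
    fun t => a i * fourierMode (ω i) t).intervalIntegrable _ _, Finset.sum_filter]
  simp [intervalIntegral.integral_const_mul, integral_fourierMode]

end FourierMode

lemma Function.Periodic.intervalIntegral_comp_sub_right {E : Type*} [NormedAddCommGroup E]
    [NormedSpace ℝ E] {f : ℝ → E} {T : ℝ} (hf : Function.Periodic f T) (ξ : ℝ) :
    ∫ t in (0 : ℝ)..T, f (t - ξ) = ∫ t in (0 : ℝ)..T, f t := by
  rw [intervalIntegral.integral_comp_sub_right, zero_sub, sub_eq_neg_add,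
    hf.intervalIntegral_add_eq (-ξ) 0, zero_add]

noncomputable def fejerKernel (N : ℕ) (t : ℝ) : ℝ :=
  ‖∑ j ∈ Ico (0 : ℤ) N, fourierMode j t‖ ^ 2 / N

lemma fejerKernel_nonneg (N : ℕ) (t : ℝ) : 0 ≤ fejerKernel N t := by
  unfold fejerKernel; positivity

@[fun_prop]
lemma continuous_fejerKernel (N : ℕ) : Continuous (fejerKernel N) := by
  unfold fejerKernel; fun_prop

lemma fejerKernel_periodic (N : ℕ) : Function.Periodic (fejerKernel N) 1 := by
  intro t; simp [fejerKernel, fourierMode_periodic _ t]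

lemma ofReal_fejerKernel (N : ℕ) (t : ℝ) :
    (fejerKernel N t : ℂ) = ∑ p ∈ Ico (0 : ℤ) N ×ˢ Ico (0 : ℤ) N,
      (N : ℂ)⁻¹ * fourierMode (p.1 - p.2) t := by
  rw [fejerKernel, ofReal_div, ofReal_pow, ← mul_conj', map_sum, sum_mul_sum, ← sum_product',
    div_eq_inv_mul, mul_sum]
  simp [conj_fourierMode, sub_eq_add_neg, fourierMode_add]

lemma integral_fourierMode_mul_fejerKernel (N : ℕ) (a : ℤ) :
    ∫ t in (0 : ℝ)..1, fourierMode a t * fejerKernel N t = ((N - |a|).toNat : ℂ) / N := by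
  simp_rw [ofReal_fejerKernel, mul_sum, mul_left_comm (fourierMode a _), ← fourierMode_add]
  rw [integral_sum_mul_fourierMode, sum_const, nsmul_eq_mul, div_eq_mul_inv]
  congr 2
  have : {p ∈ Ico (0 : ℤ) N ×ˢ Ico (0 : ℤ) N | a + (p.1 - p.2) = 0} =
      (Ico (max 0 (-a)) (min N (N - a))).image fun j => (j, j + a) := by
    ext ⟨j, j'⟩; simp only [mem_filter, mem_product, mem_Ico, mem_image, Prod.mk.injEq]
    constructor
    · intro h; exact ⟨j, by omega, rfl, by omega⟩
    · rintro ⟨i, hi, rfl, rfl⟩; omega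
  rw [this, card_image_of_injective _ fun _ _ h => (Prod.mk.inj h).1, Int.card_Ico]
  congr 1
  rcases abs_cases a with ⟨h, _⟩ | ⟨h, _⟩ <;> rw [h] <;> omega

lemma integral_fejerKernel_le_one (N : ℕ) : ∫ t in (0 : ℝ)..1, fejerKernel N t ≤ 1 := by
  have h := integral_fourierMode_mul_fejerKernel N 0
  simp only [fourierMode_zero, one_mul, intervalIntegral.integral_ofReal, abs_zero,
    sub_zero, Int.toNat_natCast] at h
  have h' : ∫ t in (0 : ℝ)..1, fejerKernel N t = N / N :=
    ofReal_injective (by push_cast; exact h)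
  exact h'.trans_le (div_self_le_one _)

noncomputable def bernsteinKernel (N : ℕ) (t : ℝ) : ℂ :=
  -I * (fourierMode N t - fourierMode (-N) t) * fejerKernel N t

@[fun_prop]
lemma continuous_bernsteinKernel (N : ℕ) : Continuous (bernsteinKernel N) := by
  unfold bernsteinKernel; fun_prop

lemma bernsteinKernel_periodic (N : ℕ) : Function.Periodic (bernsteinKernel N) 1 := by
  intro t; simp [bernsteinKernel, fourierMode_periodic _ t, fejerKernel_periodic N t]

lemma norm_bernsteinKernel_le (N : ℕ) (t : ℝ) : ‖bernsteinKernel N t‖ ≤ 2 * fejerKernel N t := by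
  have h : ‖fourierMode N t - fourierMode (-N) t‖ ≤ 2 :=
    (norm_sub_le _ _).trans_eq (by simp [norm_fourierMode]; norm_num)
  rw [bernsteinKernel, norm_mul, norm_mul, norm_neg, norm_I, one_mul, norm_real,
    Real.norm_of_nonneg (fejerKernel_nonneg N t)]
  exact mul_le_mul_of_nonneg_right h (fejerKernel_nonneg N t)

lemma integral_norm_bernsteinKernel_comp_sub_le (N : ℕ) (ξ : ℝ) :
    ∫ t in (0 : ℝ)..1, ‖bernsteinKernel N (t - ξ)‖ ≤ 2 := by
  calc ∫ t in (0 : ℝ)..1, ‖bernsteinKernel N (t - ξ)‖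
      = ∫ t in (0 : ℝ)..1, ‖bernsteinKernel N t‖ :=
        ((bernsteinKernel_periodic N).comp norm).intervalIntegral_comp_sub_right ξ
    _ ≤ ∫ t in (0 : ℝ)..1, 2 * fejerKernel N t :=
        intervalIntegral.integral_mono_on zero_le_one
          (Continuous.intervalIntegrable (by fun_prop) _ _)
          (Continuous.intervalIntegrable (by fun_prop) _ _)
          fun t _ => norm_bernsteinKernel_le N t
    _ ≤ 2 := by
        rw [intervalIntegral.integral_const_mul]
        linarith [integral_fejerKernel_le_one N]

lemma integral_fourierMode_mul_bernsteinKernel {N : ℕ} {m : ℤ} (hm : |m| ≤ N) :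
    ∫ t in (0 : ℝ)..1, fourierMode m t * bernsteinKernel N t = I * m / N := by
  have h : ∀ t, fourierMode m t * bernsteinKernel N t =
      -I * (fourierMode (m + N) t * fejerKernel N t -
        fourierMode (m + -N) t * fejerKernel N t) := by
    intro t; simp only [bernsteinKernel, fourierMode_add]; ring
  simp_rw [h]
  rw [intervalIntegral.integral_const_mul,
    intervalIntegral.integral_sub (Continuous.intervalIntegrable (by fun_prop) _ _)
      (Continuous.intervalIntegrable (by fun_prop) _ _),
    integral_fourierMode_mul_fejerKernel, integral_fourierMode_mul_fejerKernel, ← sub_div]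
  have hcount : ((N - |m + N|).toNat : ℤ) - (N - |m + -N|).toNat = -m := by
    rw [abs_le] at hm
    rw [abs_of_nonneg (by omega), abs_of_nonpos (by omega)]; omega
  have hcount' : ((N - |m + N|).toNat : ℂ) - (N - |m + -N|).toNat = -m := by
    exact_mod_cast hcount
  rw [hcount']
  ring

lemma integral_fourierMode_mul_bernsteinKernel_comp_sub {N : ℕ} {m : ℤ} (hm : |m| ≤ N) (ξ : ℝ) :
    ∫ t in (0 : ℝ)..1, fourierMode m t * bernsteinKernel N (t - ξ) =
      fourierMode m ξ * (I * m / N) := by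
  have h : (fun t => fourierMode m t * bernsteinKernel N (t - ξ)) =
      fun t => fourierMode m ξ * (fourierMode m (t - ξ) * bernsteinKernel N (t - ξ)) :=
    funext fun t => by rw [← mul_assoc, ← fourierMode_apply_add, add_sub_cancel]
  rw [h, intervalIntegral.integral_const_mul, ← integral_fourierMode_mul_bernsteinKernel hm]
  exact congrArg _
    (((fourierMode_periodic m).mul (bernsteinKernel_periodic N)).intervalIntegral_comp_sub_right ξ)

lemma norm_integral_mul_bernsteinKernel_comp_sub_le {q : ℝ → ℂ} {A : ℝ}
    (hA : ∀ t ∈ Set.Icc (0 : ℝ) 1, ‖q t‖ ≤ A) (N : ℕ) (ξ : ℝ) :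
    ‖∫ t in (0 : ℝ)..1, q t * bernsteinKernel N (t - ξ)‖ ≤ 2 * A := by
  have hA0 : 0 ≤ A := (norm_nonneg _).trans (hA 0 (by simp))
  calc ‖∫ t in (0 : ℝ)..1, q t * bernsteinKernel N (t - ξ)‖
      ≤ ∫ t in (0 : ℝ)..1, A * ‖bernsteinKernel N (t - ξ)‖ := by
        refine intervalIntegral.norm_integral_le_of_norm_le zero_le_one
          (.of_forall fun t ht => ?_) (Continuous.intervalIntegrable (by fun_prop) _ _)
        rw [norm_mul]
        gcongr
        exact hA t (Set.Ioc_subset_Icc_self ht)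
    _ ≤ A * 2 := by
        rw [intervalIntegral.integral_const_mul]
        exact mul_le_mul_of_nonneg_left (integral_norm_bernsteinKernel_comp_sub_le N ξ) hA0
    _ = 2 * A := mul_comm _ _

def IsTrigPoly (N : ℕ) (q : ℝ → ℂ) : Prop :=
  ∃ d : ℤ → ℂ, ∀ t, q t = ∑ k ∈ Icc (-(N : ℤ)) N, d k * fourierMode k t

namespace IsTrigPoly

variable {N : ℕ} {q : ℝ → ℂ}

lemma periodic (hq : IsTrigPoly N q) : Function.Periodic q 1 := by
  obtain ⟨d, hd⟩ := hq
  intro t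
  simp only [hd, fourierMode_periodic _ t]

lemma hasDerivAt (hq : IsTrigPoly N q) (ξ : ℝ) :
    HasDerivAt q (2 * π * N * ∫ t in (0 : ℝ)..1, q t * bernsteinKernel N (t - ξ)) ξ := by
  obtain ⟨d, hd⟩ := hq
  obtain rfl : q = fun t => ∑ k ∈ Icc (-(N : ℤ)) N, d k * fourierMode k t := funext hd
  have hint : ∫ t in (0 : ℝ)..1, (∑ k ∈ Icc (-(N : ℤ)) N, d k * fourierMode k t) *
      bernsteinKernel N (t - ξ) =
        ∑ k ∈ Icc (-(N : ℤ)) N, d k * (fourierMode k ξ * (I * k / N)) := by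
    simp_rw [sum_mul, mul_assoc]
    rw [intervalIntegral.integral_finsetSum fun k _ =>
      Continuous.intervalIntegrable (by fun_prop) _ _]
    refine sum_congr rfl fun k hk => ?_
    rw [intervalIntegral.integral_const_mul,
      integral_fourierMode_mul_bernsteinKernel_comp_sub (abs_le.2 (mem_Icc.1 hk)) ξ]
  rw [hint, mul_sum]
  refine HasDerivAt.fun_sum fun k hk => ?_
  refine ((hasDerivAt_fourierMode k ξ).const_mul (d k)).congr_deriv ?_
  rcases eq_or_ne N 0 with rfl | hN
  · obtain rfl : k = 0 := by simpa using hk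
    simp
  · field_simp

lemma norm_sub_le (hq : IsTrigPoly N q) {A : ℝ} (hA : ∀ t ∈ Set.Icc (0 : ℝ) 1, ‖q t‖ ≤ A)
    (x y : ℝ) : ‖q x - q y‖ ≤ 4 * π * N * A * |x - y| := by
  have hbound : ∀ ξ, ‖2 * π * N * ∫ t in (0 : ℝ)..1, q t * bernsteinKernel N (t - ξ)‖ ≤
      4 * π * N * A := fun ξ => by
    rw [norm_mul, show ‖(2 * π * N : ℂ)‖ = 2 * π * N by
      rw [show (2 * π * N : ℂ) = ((2 * π * N : ℝ) : ℂ) by push_cast; ring, norm_real,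
        Real.norm_of_nonneg (by positivity)]]
    calc 2 * π * N * ‖∫ t in (0 : ℝ)..1, q t * bernsteinKernel N (t - ξ)‖
        ≤ 2 * π * N * (2 * A) := by
          gcongr; exact norm_integral_mul_bernsteinKernel_comp_sub_le hA N ξ
      _ = 4 * π * N * A := by ring
  simpa using Convex.norm_image_sub_le_of_norm_hasDerivWithin_le
    (fun ξ _ => (hq.hasDerivAt ξ).hasDerivWithinAt) (fun ξ _ => hbound ξ) convex_univ
    (Set.mem_univ y) (Set.mem_univ x)

end IsTrigPoly

lemma isTrigPoly_sum_mul_fourierMode_neg (N : ℕ) (a : ℤ → ℂ) :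
    IsTrigPoly N fun t => ∑ k ∈ Icc (-(N : ℤ)) N, a k * fourierMode (-k) t := by
  refine ⟨fun k => a (-k), fun t => sum_nbij' (fun k => -k) (fun k => -k) ?_ ?_ ?_ ?_ ?_⟩ <;>
    simp +contextual [neg_le]

lemma exists_fin_int_abs_sub_le {M : ℕ} (hM : 0 < M) (x : ℝ) :
    ∃ (l : Fin M) (k : ℤ), |x - ((l : ℝ) / M + k)| ≤ 1 / (2 * M) := by
  set n := round (M * x)
  have hMR : (0 : ℝ) < M := by exact_mod_cast hM
  have h0 : 0 ≤ n % M := Int.emod_nonneg n (by omega)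
  have hlt : n % M < M := Int.emod_lt_of_pos n (by omega)
  refine ⟨⟨(n % M).toNat, by omega⟩, n / M, ?_⟩
  have hn : (((n % M).toNat : ℕ) : ℝ) / M + (n / M : ℤ) = n / M := by
    have hcast : (((n % M).toNat : ℕ) : ℝ) + M * (n / M : ℤ) = n := by
      have := Int.emod_add_mul_ediv n M
      rw [← Int.toNat_of_nonneg h0] at this
      exact_mod_cast this
    rw [← hcast]; field_simp
  rw [Fin.val_mk, hn, show x - n / M = (M * x - n) / M by field_simp, abs_div, abs_of_pos hMR,
    show 1 / (2 * (M : ℝ)) = (1 / 2) / M by ring]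
  exact div_le_div_of_nonneg_right (abs_sub_round _) hMR.le

lemma exists_grid_le_add {N M : ℕ} (hM : 0 < M) {g : ℝ → ℝ} (hg : IsTrigPoly N fun t => (g t : ℂ))
    {A : ℝ} (hA : ∀ t ∈ Set.Icc (0 : ℝ) 1, |g t| ≤ A) (x : ℝ) :
    ∃ l : Fin M, g x ≤ g (l / M) + 2 * π * N * A / M := by
  obtain ⟨l, k, hlk⟩ := exists_fin_int_abs_sub_le hM x
  have hper : Function.Periodic g 1 := fun t => ofReal_injective (hg.periodic t)
  have hdist : |g x - g (l / M + k)| ≤ 4 * π * N * A * |x - (l / M + k)| := by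
    simpa [← ofReal_sub] using hg.norm_sub_le (by simpa using hA) x (l / M + k)
  have hA0 : 0 ≤ A := (abs_nonneg _).trans (hA 0 (by simp))
  have hshift : g (l / M + k) = g (l / M) := by simpa using hper.int_mul k (l / M)
  refine ⟨l, ?_⟩
  rw [hshift] at hdist
  calc g x ≤ g (l / M) + 4 * π * N * A * |x - (l / M + k)| := by
        linarith [le_abs_self (g x - g (l / M))]
    _ ≤ g (l / M) + 4 * π * N * A * (1 / (2 * M)) := by gcongr
    _ = g (l / M) + 2 * π * N * A / M := by ring

lemma exists_grid_le_add₂ {N M : ℕ} (hM : 0 < M) {Q : ℝ → ℝ → ℝ}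
    (hrow : ∀ y, IsTrigPoly N fun x => (Q x y : ℂ)) (hcol : ∀ x, IsTrigPoly N fun y => (Q x y : ℂ))
    {A : ℝ} (hA : ∀ x ∈ Set.Icc (0 : ℝ) 1, ∀ y ∈ Set.Icc (0 : ℝ) 1, |Q x y| ≤ A)
    (x : ℝ) {y : ℝ} (hy : y ∈ Set.Icc (0 : ℝ) 1) :
    ∃ l : Fin M × Fin M, Q x y ≤ Q (l.1 / M) (l.2 / M) + 4 * π * N * A / M := by
  obtain ⟨l₁, h₁⟩ := exists_grid_le_add hM (hrow y) (fun t ht => hA t ht y hy) x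
  have hl₁ : (l₁ : ℝ) / M ∈ Set.Icc (0 : ℝ) 1 :=
    ⟨by positivity, div_le_one_of_le₀ (by exact_mod_cast l₁.is_lt.le) (by positivity)⟩
  obtain ⟨l₂, h₂⟩ := exists_grid_le_add hM (hcol _) (hA _ hl₁) y
  refine ⟨(l₁, l₂), ?_⟩
  calc Q x y ≤ Q (l₁ / M) (l₂ / M) + 2 * π * N * A / M + 2 * π * N * A / M := by linarith
    _ = Q (l₁ / M) (l₂ / M) + 4 * π * N * A / M := by ring

lemma cexp_neg_two_pi_I_mul_add (k p : ℤ) (τ f : ℝ) :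
    exp (-(2 * π * I * (k * τ + p * f))) = fourierMode (-k) τ * fourierMode (-p) f := by
  simp only [fourierMode, ← Complex.exp_add]; push_cast; ring_nf

lemma isTrigPoly_sections {N : ℕ} {Q : ℝ → ℝ → ℝ} {c : ℤ × ℤ → ℂ}
    (hc : ∀ τ f : ℝ, (Q τ f : ℂ) = ∑ k ∈ Icc (-(N : ℤ)) N, ∑ p ∈ Icc (-(N : ℤ)) N,
      c (k, p) * exp (-(2 * π * I * (k * τ + p * f)))) :
    (∀ f, IsTrigPoly N fun τ => (Q τ f : ℂ)) ∧ ∀ τ, IsTrigPoly N fun f => (Q τ f : ℂ) := by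
  refine ⟨fun f => ?_, fun τ => ?_⟩
  · convert isTrigPoly_sum_mul_fourierMode_neg N
      (fun k => ∑ p ∈ Icc (-(N : ℤ)) N, c (k, p) * fourierMode (-p) f) using 2 with τ
    simp_rw [hc, cexp_neg_two_pi_I_mul_add, sum_mul]
    exact sum_congr rfl fun _ _ => sum_congr rfl fun _ _ => by ring
  · convert isTrigPoly_sum_mul_fourierMode_neg N
      (fun p => ∑ k ∈ Icc (-(N : ℤ)) N, c (k, p) * fourierMode (-k) τ) using 2 with f
    simp_rw [hc, cexp_neg_two_pi_I_mul_add, sum_mul]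
    rw [sum_comm]
    exact sum_congr rfl fun _ _ => sum_congr rfl fun _ _ => by ring

/-- Discretization bound for a nonnegative bivariate trigonometric polynomial of degree
at most N in each variable: the supremum over [0,1]² is controlled by the maximum over
a uniform M×M grid, provided M > 4πN. -/
theorem stmt7 (N M : ℕ) (hM : 4 * Real.pi * N < M) (Q : ℝ → ℝ → ℝ)
    (hpos : ∀ τ f : ℝ, 0 ≤ Q τ f)
    (hQ : ∃ c : ℤ × ℤ → ℂ, ∀ τ f : ℝ, (Q τ f : ℂ) =
      ∑ k ∈ Finset.Icc (-(N : ℤ)) N, ∑ p ∈ Finset.Icc (-(N : ℤ)) N,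
        c (k, p) * Complex.exp (-(2 * Real.pi * Complex.I * (k * τ + p * f)))) :
    sSup ((fun r : ℝ × ℝ => Q r.1 r.2) '' (Set.Icc 0 1 ×ˢ Set.Icc 0 1)) ≤
      (1 - 4 * Real.pi * N / M)⁻¹ *
        ⨆ l : Fin M × Fin M, Q ((l.1 : ℝ) / M) ((l.2 : ℝ) / M) := by
  obtain ⟨c, hc⟩ := hQ
  have hM0 : 0 < M := by exact_mod_cast (by positivity : (0 : ℝ) ≤ 4 * π * N).trans_lt hM
  obtain ⟨hrow, hcol⟩ := isTrigPoly_sections hc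
  have hcont : Continuous fun r : ℝ × ℝ => Q r.1 r.2 := by
    have : Continuous fun r : ℝ × ℝ => (Q r.1 r.2 : ℂ) := by simp_rw [hc]; fun_prop
    exact (continuous_re.comp this).congr fun r => ofReal_re _
  set S := Set.Icc (0 : ℝ) 1 ×ˢ Set.Icc (0 : ℝ) 1
  set A := sSup ((fun r : ℝ × ℝ => Q r.1 r.2) '' S)
  set G := ⨆ l : Fin M × Fin M, Q ((l.1 : ℝ) / M) ((l.2 : ℝ) / M)
  have hbdd : BddAbove ((fun r : ℝ × ℝ => Q r.1 r.2) '' S) :=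
    (isCompact_Icc.prod isCompact_Icc).bddAbove_image hcont.continuousOn
  have hA : ∀ x ∈ Set.Icc (0 : ℝ) 1, ∀ y ∈ Set.Icc (0 : ℝ) 1, |Q x y| ≤ A := fun x hx y hy => by
    rw [abs_of_nonneg (hpos x y)]
    exact le_csSup hbdd ⟨(x, y), ⟨hx, hy⟩, rfl⟩
  have hAG : A ≤ G + 4 * π * N * A / M := by
    refine csSup_le (((Set.nonempty_Icc.2 zero_le_one).prod
      (Set.nonempty_Icc.2 zero_le_one)).image _) ?_
    rintro _ ⟨⟨x, y⟩, ⟨-, hy⟩, rfl⟩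
    obtain ⟨l, hl⟩ := exists_grid_le_add₂ hM0 hrow hcol hA x hy
    have hG : Q (l.1 / M) (l.2 / M) ≤ G :=
      le_ciSup (f := fun l : Fin M × Fin M => Q ((l.1 : ℝ) / M) ((l.2 : ℝ) / M))
        (Set.finite_range _).bddAbove l
    linarith
  have hθ : 0 < 1 - 4 * π * N / M := by
    rw [sub_pos, div_lt_one (by exact_mod_cast hM0)]; exact hM
  rw [le_inv_mul_iff₀ hθ, sub_mul, one_mul, div_mul_eq_mul_div]
  linarith
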